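/- arXiv:2502.10898 — 9 statements merged into one kernel-verified Lean document; each statement's English description precedes it below -/
import Mathlib

section
/- Let J be an m × m Jordan block over a field F of characteristic 2 with eigenvalue λ ≠ 0, i.e., J has λ on the diagonal, 1 on the superdiagonal, and 0 elsewhere. Let s be the least integer with m ≤ 2^s, and let t be the multiplicative order of λ. Then the least positive integer k with J^k = I is t·2^s. -/
/-!
Write `J = λ • (1 + λ⁻¹ • N)` with `N` the nilpotent shift. The two factors commute. The scalar
factor has order `t`, which is odd because squaring is injective in a reduced ring of
characteristic 2. The unipotent factor has order `2 ^ s`, since by Frobenius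
`(1 + x) ^ 2 ^ a = 1 + x ^ 2 ^ a` and `N ^ i = 0` exactly when `m ≤ i`. Commuting elements of
coprime orders have the product of the orders as their order.
-/

def jordanBlock (F : Type) [Field F] (m : ℕ) (l : F) : Matrix (Fin m) (Fin m) F :=
  Matrix.of fun i j => if i = j then l else if (i : ℕ) + 1 = (j : ℕ) then 1 else 0

theorem isLeast_orderOf {G : Type*} [Monoid G] {x : G} (hx : 0 < orderOf x) :
    IsLeast {k : ℕ | 0 < k ∧ x ^ k = 1} (orderOf x) :=
  ⟨⟨hx, pow_orderOf_eq_one x⟩, fun _ ⟨hk, hxk⟩ => orderOf_le_of_pow_eq_one hk hxk⟩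

theorem orderOf_coprime_char {R : Type*} [CommRing R] [IsReduced R] (p : ℕ) [hp : Fact p.Prime]
    [CharP R p] {x : R} (hx : 0 < orderOf x) : (orderOf x).Coprime p := by
  refine (Nat.coprime_comm.1 ((Nat.Prime.coprime_iff_not_dvd hp.out).2 ?_))
  rintro ⟨u, hu⟩
  have hxu : x ^ u = 1 := frobenius_inj R p <| by
    rw [frobenius_def, frobenius_def, one_pow, ← pow_mul, mul_comm, ← hu, pow_orderOf_eq_one]
  have := orderOf_le_of_pow_eq_one (Nat.pos_of_mul_pos_left (hu ▸ hx)) hxu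
  nlinarith [hp.out.two_le]

theorem orderOf_one_add_eq_char_pow {R : Type*} [Ring R] (p : ℕ) [hp : Fact p.Prime] [CharP R p]
    {x : R} {s : ℕ} (hs : IsLeast {s | x ^ p ^ s = 0} s) : orderOf (1 + x) = p ^ s := by
  have pow_eq_one_iff (a : ℕ) : (1 + x) ^ p ^ a = 1 ↔ x ^ p ^ a = 0 := by
    rw [add_pow_char_pow_of_commute p a (Commute.one_left x), one_pow, add_eq_left]
  obtain ⟨a, ha, hord⟩ :=
    (Nat.dvd_prime_pow hp.out).1 (orderOf_dvd_of_pow_eq_one ((pow_eq_one_iff s).2 hs.1))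
  rw [hord, le_antisymm ha (hs.2 ((pow_eq_one_iff a).1 (hord ▸ pow_orderOf_eq_one _)))]

def shiftMatrix (R : Type*) [Zero R] [One R] (m : ℕ) : Matrix (Fin m) (Fin m) R :=
  Matrix.of fun i j => if (i : ℕ) + 1 = j then 1 else 0

theorem shiftMatrix_pow_apply {R : Type*} [Semiring R] {m : ℕ} (i : ℕ) (a b : Fin m) :
    (shiftMatrix R m ^ i) a b = if (a : ℕ) + i = b then 1 else 0 := by
  induction i generalizing b with
  | zero => simp [Matrix.one_apply, Fin.ext_iff]
  | succ i ih =>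
    rw [pow_succ, Matrix.mul_apply]
    simp_rw [ih, shiftMatrix, Matrix.of_apply, ite_mul, one_mul, zero_mul]
    rw [Fin.sum_univ_eq_sum_range (fun c => if (a : ℕ) + i = c then
      (if c + 1 = (b : ℕ) then (1 : R) else 0) else 0), Finset.sum_ite_eq]
    grind

theorem shiftMatrix_pow_eq_zero_iff {R : Type*} [Semiring R] [Nontrivial R] {m i : ℕ} :
    shiftMatrix R m ^ i = 0 ↔ m ≤ i := by
  refine ⟨fun h => ?_, fun h => ?_⟩
  · by_contra! hi
    simpa [shiftMatrix_pow_apply] using congrFun₂ h ⟨0, by omega⟩ ⟨i, hi⟩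
  · ext a b
    simp only [shiftMatrix_pow_apply, Matrix.zero_apply]
    grind

theorem jordanBlock_eq_algebraMap_add (F : Type) [Field F] (m : ℕ) (l : F) :
    jordanBlock F m l = algebraMap F _ l + shiftMatrix F m := by
  ext i j
  simp only [jordanBlock, shiftMatrix, Matrix.of_apply, Matrix.add_apply,
    Matrix.algebraMap_matrix_apply]
  split_ifs <;> simp_all

theorem jordanBlock_eq_algebraMap_mul (F : Type) [Field F] (m : ℕ) {l : F} (hl : l ≠ 0) :
    jordanBlock F m l = algebraMap F _ l * (1 + l⁻¹ • shiftMatrix F m) := by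
  rw [jordanBlock_eq_algebraMap_add, mul_add, mul_one, ← Algebra.smul_def, smul_smul,
    mul_inv_cancel₀ hl, one_smul]

theorem stmt_2 (F : Type) [Field F] (hchar : CharP F 2) (m s t : ℕ) (hm : 0 < m)
    (lam : F) (hlam : lam ≠ 0) (ht : orderOf lam = t) (htpos : 0 < t)
    (hs : IsLeast {s : ℕ | m ≤ 2 ^ s} s) :
    IsLeast {k : ℕ | 0 < k ∧ jordanBlock F m lam ^ k = 1} (t * 2 ^ s) := by
  have := hchar
  have : Nonempty (Fin m) := ⟨⟨0, hm⟩⟩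
  have hscalar : orderOf (algebraMap F (Matrix (Fin m) (Fin m) F) lam) = t :=
    ht ▸ orderOf_injective (algebraMap F _).toMonoidHom (algebraMap F _).injective lam
  have hunipotent : orderOf (1 + lam⁻¹ • shiftMatrix F m) = 2 ^ s := by
    refine orderOf_one_add_eq_char_pow 2 ?_
    simpa only [smul_pow, smul_eq_zero, pow_eq_zero_iff', inv_eq_zero, hlam, false_and, false_or,
      shiftMatrix_pow_eq_zero_iff] using hs
  have hcoprime : t.Coprime (2 ^ s) := (ht ▸ orderOf_coprime_char 2 (ht ▸ htpos)).pow_right s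
  have hJ : orderOf (jordanBlock F m lam) = t * 2 ^ s := by
    rw [jordanBlock_eq_algebraMap_mul F m hlam, (Algebra.commute_algebraMap_left _ _)
      |>.orderOf_mul_eq_mul_orderOf_of_coprime (hscalar ▸ hunipotent ▸ hcoprime), hscalar, hunipotent]
  exact hJ ▸ isLeast_orderOf (hJ ▸ by positivity)
end

section
/- Over GF(2), the Chebyshev-like polynomials defined by p_0 = 1, p_1 = λ, p_i = λ·p_{i−1} + p_{i−2} satisfy p_{2i} = (p_i + p_{i−1})^2 and p_{2i+1} = λ·(p_i)^2 for all i ≥ 1. -/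
noncomputable def chebLike : ℕ → Polynomial (ZMod 2)
  | 0 => 1
  | 1 => Polynomial.X
  | (n + 2) => Polynomial.X * chebLike (n + 1) + chebLike n

private lemma two_eq_zero' : (2 : Polynomial (ZMod 2)) = 0 := by
  have := CharP.cast_eq_zero (Polynomial (ZMod 2)) 2
  norm_num at this
  exact this

private lemma sq_add (a b : Polynomial (ZMod 2)) : (a + b) ^ 2 = a ^ 2 + b ^ 2 := by
  ring_nf
  rw [two_eq_zero']
  ring

theorem stmt_4 (i : ℕ) (hi : 1 ≤ i) :
    chebLike (2 * i) = (chebLike i + chebLike (i - 1)) ^ 2 ∧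
    chebLike (2 * i + 1) = Polynomial.X * (chebLike i) ^ 2 := by
  induction i with
  | zero => omega
  | succ n ih =>
    match n, ih with
    | 0, _ =>
      constructor
      · show chebLike 2 = (chebLike 1 + chebLike 0) ^ 2
        simp only [chebLike, sq_add]
        ring
      · show chebLike 3 = Polynomial.X * chebLike 1 ^ 2
        show Polynomial.X * chebLike 2 + chebLike 1 = _
        simp only [chebLike]
        ring_nf
        try rw [two_eq_zero']
        try ring
    | m + 1, ih =>
      obtain ⟨h1, h2⟩ := ih (Nat.le_add_left 1 m)
      have d1 : chebLike (2 * (m + 2)) = Polynomial.X * chebLike (2 * (m + 1) + 1) + chebLike (2 * (m + 1)) := by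
        rw [show 2 * (m + 2) = (2 * (m+1)) + 2 by ring]
        rfl
      have d2 : chebLike (2 * (m + 2) + 1) = Polynomial.X * chebLike (2 * (m + 2)) + chebLike (2 * (m + 1) + 1) := by
        rw [show 2 * (m + 2) + 1 = (2 * (m+1) + 1) + 2 by ring,
            show 2 * (m + 2) = (2 * (m+1) + 1) + 1 by ring]
        rfl
      have dnext : chebLike (m + 2) = Polynomial.X * chebLike (m + 1) + chebLike m := rfl
      have key1 : chebLike (2 * (m + 2)) = (chebLike (m + 2) + chebLike (m + 1)) ^ 2 := by
        rw [d1, h2, h1, dnext, sq_add, sq_add, sq_add]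
        simp only [Nat.add_sub_cancel]
        ring_nf
        try rw [two_eq_zero']
        try ring
      refine ⟨by simpa using key1, ?_⟩
      rw [d2, key1, h2, dnext, sq_add]
      ring_nf
      rw [two_eq_zero']; ring
end

section
/- Let F be a field of characteristic 2 and α ∈ F an element with α^(n+1) = 1 and α ≠ 1, where n is even. Then β = α + α^(−1) is a root of the polynomial p_n over GF(2) defined by p_0 = 1, p_1 = λ, p_i = λ·p_{i−1} + p_{i−2}. In other words, the eigenvalues of the n × n tridiagonal matrix A_n (0 on diagonal, 1 on the off-diagonals) over GF(2) are exactly the elements α^j + α^(−j) for 1 ≤ j ≤ n/2, where α is a primitive (n+1)-st root of unity. -/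
open Polynomial

-- key evaluation identity
lemma cheb_key {F : Type} [Field F] [CharP F 2] (t s : F) (hts : t * s = 1) :
    ∀ k, (t + s) * Polynomial.eval₂ (ZMod.castHom (dvd_refl 2) F) (t + s) (chebLike k)
      = t ^ (k+1) + s ^ (k+1) := by
  have h2 : (2 : F) = 0 := by
    have := CharP.cast_eq_zero F 2; exact_mod_cast this
  intro k
  induction k using Nat.strong_induction_on with
  | _ k ih =>
    match k with
    | 0 => simp [chebLike]
    | 1 =>
      simp only [chebLike, eval₂_X]
      linear_combination (t * s : F) * h2
    | (k+2) =>
      have h1 := ih (k+1) (by omega)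
      have h0 := ih k (by omega)
      simp only [chebLike, eval₂_add, eval₂_mul, eval₂_X]
      linear_combination (t + s) * h1 + h0 + (t^(k+1) + s^(k+1)) * hts + (t^(k+1) + s^(k+1))*h2

lemma chebLike_rec (k : ℕ) : chebLike (k+2) = X * chebLike (k+1) + chebLike k := rfl

lemma cheb_monic : ∀ k, (chebLike k).Monic ∧ (chebLike k).natDegree = k := by
  intro k
  induction k using Nat.strong_induction_on with
  | _ k ih =>
    match k with
    | 0 => exact ⟨monic_one, natDegree_one⟩
    | 1 => exact ⟨monic_X, natDegree_X⟩
    | (k+2) =>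
      obtain ⟨hm1, hd1⟩ := ih (k+1) (by omega)
      obtain ⟨hm0, hd0⟩ := ih k (by omega)
      have hmul : (X * chebLike (k+1)).Monic := monic_X.mul hm1
      have hdmul : (X * chebLike (k+1)).natDegree = k + 2 := by
        rw [natDegree_mul X_ne_zero hm1.ne_zero, natDegree_X, hd1]; omega
      have hlt : (chebLike k).degree < (X * chebLike (k+1)).degree := by
        rw [degree_eq_natDegree hm0.ne_zero, degree_eq_natDegree hmul.ne_zero, hd0, hdmul]
        exact_mod_cast by omega
      refine ⟨?_, ?_⟩
      · rw [chebLike_rec]; exact hmul.add_of_left hlt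
      · rw [chebLike_rec, natDegree_add_eq_left_of_degree_lt hlt, hdmul]

lemma cheb_sq : ∀ m, chebLike (2*m+1) = X * (chebLike m)^2 ∧
    chebLike (2*m+2) = (chebLike (m+1) + chebLike m)^2 := by
  have hp2 : (2 : Polynomial (ZMod 2)) = 0 := by
    have := CharP.cast_eq_zero (Polynomial (ZMod 2)) 2; exact_mod_cast this
  intro m
  induction m with
  | zero =>
    refine ⟨by show X = _; simp [chebLike], ?_⟩
    show X * X + 1 = (X + 1)^2
    linear_combination (-X : Polynomial (ZMod 2)) * hp2
  | succ m ih =>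
    obtain ⟨h1, h2⟩ := ih
    have e1 : chebLike (2*(m+1)+1) = X * (chebLike (m+1))^2 := by
      rw [show 2*(m+1)+1 = (2*m+1)+2 from by ring, chebLike_rec,
        show 2*m+1+1 = 2*m+2 from rfl]
      linear_combination X*h2 + h1 + (X*chebLike m*(chebLike (m+1)+chebLike m))*hp2
    refine ⟨e1, ?_⟩
    rw [show 2*(m+1)+2 = (2*m+2)+2 from by ring, chebLike_rec (2*m+2),
      show (2*m+2)+1 = 2*(m+1)+1 from by ring, e1, h2,
      show m+1+1 = m+2 from rfl, chebLike_rec m]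
    linear_combination (-(X*chebLike (m+1)*(chebLike m + chebLike (m+1))))*hp2

lemma cheb_root {F : Type} [Field F] [CharP F 2] (n : ℕ) (t : F)
    (h1 : t ^ (n+1) = 1) (hne : t ≠ 1) :
    Polynomial.eval₂ (ZMod.castHom (dvd_refl 2) F) (t + t⁻¹) (chebLike n) = 0 := by
  have h2 : (2 : F) = 0 := by
    have := CharP.cast_eq_zero F 2; exact_mod_cast this
  have ht0 : t ≠ 0 := by
    rintro rfl; simp at h1
  have hts : t * t⁻¹ = 1 := mul_inv_cancel₀ ht0
  have key := cheb_key t t⁻¹ hts n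
  have hinv : (t⁻¹) ^ (n+1) = 1 := by
    rw [inv_pow, h1, inv_one]
  rw [h1, hinv] at key
  have hsum : t + t⁻¹ ≠ 0 := by
    intro h0
    have htt : t = t⁻¹ := by
      rw [← CharTwo.neg_eq t⁻¹]; exact eq_neg_of_add_eq_zero_left h0
    have hsq : t * t = 1 := by nth_rewrite 2 [htt]; exact hts
    have hz : (t + 1) ^ 2 = 0 := by
      rw [CharTwo.add_sq, one_pow, sq, hsq]; linear_combination h2
    have hz1 : t + 1 = 0 := by
      exact pow_eq_zero_iff (n := 2) (by norm_num) |>.mp hz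
    have : t = -1 := eq_neg_of_add_eq_zero_left hz1
    rw [CharTwo.neg_eq] at this
    exact hne this
  have hz : (t + t⁻¹) * Polynomial.eval₂ (ZMod.castHom (dvd_refl 2) F) (t + t⁻¹) (chebLike n) = 0 := by
    rw [key]; linear_combination h2
  exact (mul_eq_zero.mp hz).resolve_left hsum


lemma inj_aux {F : Type} [Field F] [CharP F 2] (u v : F) (hu0 : u ≠ 0) (hv0 : v ≠ 0)
    (h : u + u⁻¹ = v + v⁻¹) : u = v ∨ u * v = 1 := by
  have h2 : (2 : F) = 0 := by
    have := CharP.cast_eq_zero F 2; exact_mod_cast this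
  have hui : u * u⁻¹ = 1 := mul_inv_cancel₀ hu0
  have hvi : v * v⁻¹ = 1 := mul_inv_cancel₀ hv0
  have key : (u + v) * (u * v + 1) = 0 := by
    linear_combination (u*v)*h + (-v)*hui + u*hvi + (u*v^2 + u)*h2
  rcases mul_eq_zero.mp key with h' | h'
  · left
    rw [← CharTwo.neg_eq v]
    exact eq_neg_of_add_eq_zero_left h'
  · right
    rw [← CharTwo.neg_eq 1]
    exact eq_neg_of_add_eq_zero_left h'

theorem stmt_8 (F : Type) [Field F] [CharP F 2] (n : ℕ) (hn : 0 < n) (hne : Even n)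
    (α : F) (hα : α ^ (n + 1) = 1) (hα1 : α ≠ 1) :
    Polynomial.eval₂ (ZMod.castHom (dvd_refl 2) F) (α + α⁻¹) (chebLike n) = 0 ∧
    (orderOf α = n + 1 →
      {x : F | Polynomial.eval₂ (ZMod.castHom (dvd_refl 2) F) x (chebLike n) = 0} =
        {x : F | ∃ j : ℕ, 1 ≤ j ∧ j ≤ n / 2 ∧ x = α ^ j + α⁻¹ ^ j}) := by
  classical
  have hα0 : α ≠ 0 := by rintro rfl; simp at hα
  refine ⟨cheb_root n α hα hα1, ?_⟩
  intro hord
  obtain ⟨r, hr⟩ := hne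
  obtain ⟨m, hm⟩ : ∃ m, n = 2 * m + 2 := ⟨r - 1, by omega⟩
  have hn2 : n / 2 = m + 1 := by omega
  set φ := ZMod.castHom (dvd_refl 2) F with hφ
  set q : Polynomial (ZMod 2) := chebLike (m+1) + chebLike m with hq
  have hsq : chebLike n = q ^ 2 := by rw [hm]; exact (cheb_sq m).2
  have hqm : q.Monic := by
    refine (cheb_monic (m+1)).1.add_of_left ?_
    rw [degree_eq_natDegree (cheb_monic m).1.ne_zero,
      degree_eq_natDegree (cheb_monic (m+1)).1.ne_zero,
      (cheb_monic m).2, (cheb_monic (m+1)).2]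
    exact_mod_cast by omega
  have hqd : q.natDegree = m + 1 := by
    rw [hq, natDegree_add_eq_left_of_degree_lt, (cheb_monic (m+1)).2]
    rw [degree_eq_natDegree (cheb_monic m).1.ne_zero,
      degree_eq_natDegree (cheb_monic (m+1)).1.ne_zero,
      (cheb_monic m).2, (cheb_monic (m+1)).2]
    exact_mod_cast by omega
  set Q : Polynomial F := q.map φ with hQ
  have hQm : Q.Monic := hqm.map φ
  have hQd : Q.natDegree = m + 1 := by rw [hQ, hqm.natDegree_map, hqd]
  have hiff : ∀ x : F, Polynomial.eval₂ φ x (chebLike n) = 0 ↔ Q.IsRoot x := by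
    intro x
    rw [Polynomial.eval₂_eq_eval_map, hsq, Polynomial.map_pow, ← hQ, Polynomial.IsRoot.def,
      Polynomial.eval_pow, pow_eq_zero_iff (n := 2) (by norm_num)]
  -- each β_j is a root
  have hroot : ∀ j, 1 ≤ j → j ≤ m + 1 → Polynomial.eval₂ φ (α ^ j + α⁻¹ ^ j) (chebLike n) = 0 := by
    intro j hj1 hj2
    have h1 : (α ^ j) ^ (n + 1) = 1 := by
      rw [← pow_mul, mul_comm, pow_mul, hα, one_pow]
    have hne1 : α ^ j ≠ 1 := by
      intro h
      have hd := orderOf_dvd_of_pow_eq_one h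
      rw [hord] at hd
      have := Nat.le_of_dvd (by omega) hd
      omega
    have := cheb_root n (α ^ j) h1 hne1
    rwa [← inv_pow] at this
  -- cancellation helper
  have hpow_eq : ∀ a b : ℕ, a ≤ b → b ≤ m + 1 → α ^ a = α ^ b → a = b := by
    intro a b hab hb hEq
    have h3 : α ^ a * α ^ (b - a) = α ^ a * 1 := by
      rw [← pow_add, show a + (b - a) = b from by omega, ← hEq, mul_one]
    have h4 : α ^ (b - a) = 1 := mul_left_cancel₀ (pow_ne_zero a hα0) h3
    have hd := orderOf_dvd_of_pow_eq_one h4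
    rw [hord] at hd
    rcases Nat.eq_zero_or_pos (b - a) with h5 | h5
    · omega
    · have := Nat.le_of_dvd h5 hd; omega
  -- injectivity
  have hinj : ∀ j ∈ Finset.Icc 1 (m+1), ∀ k ∈ Finset.Icc 1 (m+1),
      α ^ j + α⁻¹ ^ j = α ^ k + α⁻¹ ^ k → j = k := by
    intro j hj k hk h
    simp only [Finset.mem_Icc] at hj hk
    rw [inv_pow, inv_pow] at h
    rcases inj_aux _ _ (pow_ne_zero j hα0) (pow_ne_zero k hα0) h with h' | h'
    · rcases le_total j k with h6 | h6
      · exact hpow_eq j k h6 hk.2 h'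
      · exact (hpow_eq k j h6 hj.2 h'.symm).symm
    · exfalso
      rw [← pow_add] at h'
      have hd := orderOf_dvd_of_pow_eq_one h'
      rw [hord] at hd
      have := Nat.le_of_dvd (by omega) hd
      omega
  have hScard : ((Finset.Icc 1 (m+1)).image (fun j => α ^ j + α⁻¹ ^ j)).card = m + 1 := by
    rw [Finset.card_image_of_injOn hinj, Nat.card_Icc]; omega
  have hQ0 : Q ≠ 0 := hQm.ne_zero
  have hsub : (Finset.Icc 1 (m+1)).image (fun j => α ^ j + α⁻¹ ^ j) ⊆ Q.roots.toFinset := by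
    intro x hx
    rw [Finset.mem_image] at hx
    obtain ⟨j, hj, rfl⟩ := hx
    rw [Finset.mem_Icc] at hj
    rw [Multiset.mem_toFinset, Polynomial.mem_roots hQ0]
    exact (hiff _).mp (hroot j hj.1 hj.2)
  have hcard : Q.roots.toFinset.card ≤ ((Finset.Icc 1 (m+1)).image (fun j => α ^ j + α⁻¹ ^ j)).card := by
    calc Q.roots.toFinset.card ≤ Multiset.card Q.roots := Multiset.toFinset_card_le _
      _ ≤ Q.natDegree := Polynomial.card_roots' Q
      _ = m + 1 := hQd
      _ = _ := hScard.symm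
  have hSeq := Finset.eq_of_subset_of_card_le hsub hcard
  ext x
  simp only [Set.mem_setOf_eq]
  constructor
  · intro hx
    have hx2 : x ∈ Q.roots.toFinset := by
      rw [Multiset.mem_toFinset, Polynomial.mem_roots hQ0]
      exact (hiff x).mp hx
    rw [← hSeq, Finset.mem_image] at hx2
    obtain ⟨j, hj, hjx⟩ := hx2
    rw [Finset.mem_Icc] at hj
    exact ⟨j, hj.1, by omega, hjx.symm⟩
  · rintro ⟨j, hj1, hj2, rfl⟩
    exact hroot j hj1 (by omega)
end

section
/- Let b be odd and let α be an element of order b in a field of characteristic 2. Then the smallest subfield of characteristic 2 containing all elements α^i + α^(−i) (for all integers i) has 2^j elements, where j = sord_2(b) is the least positive integer such that 2^j ≡ ±1 (mod b). -/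
lemma zpow_eq_zpow_of_modeq {F : Type*} [Field F] (α : F) (hα0 : α ≠ 0) (b : ℕ)
    (hαb : α ^ b = 1) (k l : ℤ) (h : (b : ℤ) ∣ k - l) : α ^ k = α ^ l := by
  obtain ⟨t, ht⟩ := h
  have hk : k = l + (b : ℤ) * t := by linarith
  rw [hk, zpow_add₀ hα0, zpow_mul, zpow_natCast, hαb, one_zpow, mul_one]

theorem stmt_10 (b : ℕ) (hb : Odd b) (hb1 : 1 < b)
    (α : AlgebraicClosure (ZMod 2)) (hα : orderOf α = b) (j : ℕ)
    (hj : IsLeast {j : ℕ | 1 ≤ j ∧ ((2 : ZMod b) ^ j = 1 ∨ (2 : ZMod b) ^ j = -1)} j) :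
    IsLeast {m : ℕ | 1 ≤ m ∧
      ∀ i : ℤ, (α ^ i + α ^ (-i)) ^ 2 ^ m = α ^ i + α ^ (-i)} j := by
  haveI : NeZero b := ⟨by omega⟩
  have hαb : α ^ b = 1 := by rw [← hα]; exact pow_orderOf_eq_one α
  have hα0 : α ≠ 0 := by
    intro h
    rw [h, zero_pow (by omega)] at hαb
    exact one_ne_zero hαb.symm
  constructor
  · obtain ⟨hj1, hj2⟩ := hj.1
    refine ⟨hj1, fun i => ?_⟩
    rw [add_pow_char_pow, ← zpow_natCast (α ^ i), ← zpow_natCast (α ^ (-i)),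
      ← zpow_mul, ← zpow_mul]
    push_cast
    rcases hj2 with h1 | h1
    · have hdvd : (b : ℤ) ∣ (2 : ℤ) ^ j - 1 := by
        have : (((2 : ℤ) ^ j - 1 : ℤ) : ZMod b) = 0 := by push_cast [h1]; ring
        exact (ZMod.intCast_zmod_eq_zero_iff_dvd _ _).mp this
      obtain ⟨t, ht⟩ := hdvd
      rw [zpow_eq_zpow_of_modeq α hα0 b hαb (i * 2 ^ j) i
            ⟨i * t, by linear_combination i * ht⟩,
        zpow_eq_zpow_of_modeq α hα0 b hαb (-i * 2 ^ j) (-i)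
            ⟨-i * t, by linear_combination (-i) * ht⟩]
    · have hdvd : (b : ℤ) ∣ (2 : ℤ) ^ j + 1 := by
        have : (((2 : ℤ) ^ j + 1 : ℤ) : ZMod b) = 0 := by push_cast [h1]; ring
        exact (ZMod.intCast_zmod_eq_zero_iff_dvd _ _).mp this
      obtain ⟨t, ht⟩ := hdvd
      rw [zpow_eq_zpow_of_modeq α hα0 b hαb (i * 2 ^ j) (-i)
            ⟨i * t, by linear_combination i * ht⟩,
        zpow_eq_zpow_of_modeq α hα0 b hαb (-i * 2 ^ j) i
            ⟨-i * t, by linear_combination (-i) * ht⟩, add_comm]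
  · rintro m ⟨hm1, hm2⟩
    have h1 := hm2 1
    rw [add_pow_char_pow] at h1
    simp only [zpow_one, zpow_neg_one] at h1
    set x : AlgebraicClosure (ZMod 2) := α ^ (2 ^ m : ℕ) with hxdef
    rw [inv_pow] at h1
    have hx0 : x ≠ 0 := pow_ne_zero _ hα0
    have hxx : x * x⁻¹ = 1 := mul_inv_cancel₀ hx0
    have haa : α * α⁻¹ = 1 := mul_inv_cancel₀ hα0
    have hfac : (x - α) * (x - α⁻¹) = 0 := by
      linear_combination x * h1 - hxx + haa
    have hcases : x = α ∨ x = α⁻¹ := by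
      rcases mul_eq_zero.mp hfac with h | h
      · exact Or.inl (sub_eq_zero.mp h)
      · exact Or.inr (sub_eq_zero.mp h)
    apply hj.2
    refine ⟨hm1, ?_⟩
    have h2pow : 1 ≤ 2 ^ m := Nat.one_le_two_pow
    rcases hcases with h | h
    · left
      have hone : α ^ (2 ^ m - 1) = 1 := by
        have : α ^ (2 ^ m - 1) * α = 1 * α := by
          rw [one_mul, ← pow_succ, Nat.sub_add_cancel h2pow, ← hxdef, h]
        exact mul_right_cancel₀ hα0 this
      have hdvd : b ∣ 2 ^ m - 1 := by
        rw [← hα]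
        exact orderOf_dvd_iff_pow_eq_one.mpr hone
      have hmod : (1 : ℕ) ≡ 2 ^ m [MOD b] := (Nat.modEq_iff_dvd' h2pow).mpr hdvd
      have := (ZMod.natCast_eq_natCast_iff _ _ _).mpr hmod
      push_cast at this
      exact this.symm
    · right
      have hone : α ^ (2 ^ m + 1) = 1 := by
        rw [pow_succ, ← hxdef, h, inv_mul_cancel₀ hα0]
      have hdvd : b ∣ 2 ^ m + 1 := by
        rw [← hα]
        exact orderOf_dvd_iff_pow_eq_one.mpr hone
      have := (ZMod.natCast_eq_zero_iff _ _).mpr hdvd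
      push_cast at this
      exact eq_neg_of_add_eq_zero_left this
end

section
/- Let J_λ and J_μ be Jordan blocks of size m = 2^(a+1) over a field of characteristic 2 with nonzero eigenvalues λ and μ respectively, with λ ≠ μ. Then the largest Jordan block in the Jordan decomposition of the Kronecker sum J_λ ⊗ I + I ⊗ J_μ has size 2^(a+1); equivalently, the minimal polynomial of the Kronecker sum is (x − (λ+μ))^(2^(a+1)). -/
open Kronecker Polynomial

section aux

variable (F : Type) [Field F]

lemma jordanBlock_zero_apply (m : ℕ) (i j : Fin m) :
    jordanBlock F m 0 i j = if (i : ℕ) + 1 = (j : ℕ) then 1 else 0 := by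
  unfold jordanBlock
  rcases eq_or_ne i j with h | h
  · subst h; simp
  · simp [Matrix.of_apply, h]

lemma jordanBlock_eq_smul_add (m : ℕ) (l : F) :
    jordanBlock F m l = l • (1 : Matrix (Fin m) (Fin m) F) + jordanBlock F m 0 := by
  ext i j
  rcases eq_or_ne i j with h | h
  · subst h; simp [jordanBlock, Matrix.one_apply]
  · simp [jordanBlock, Matrix.one_apply, h]

lemma shift_pow (m k : ℕ) (i j : Fin m) :
    (jordanBlock F m 0 ^ k) i j = if (i : ℕ) + k = (j : ℕ) then 1 else 0 := by
  induction k generalizing j with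
  | zero => simp [Matrix.one_apply, Fin.ext_iff]
  | succ k ih =>
    rw [pow_succ, Matrix.mul_apply]
    rcases lt_or_ge ((i : ℕ) + k) m with h | h
    · rw [Finset.sum_eq_single (⟨(i : ℕ) + k, h⟩ : Fin m)]
      · rw [ih, jordanBlock_zero_apply]
        simp [← add_assoc]
      · intro x _ hx
        rw [ih]
        have : ¬ ((i : ℕ) + k = (x : ℕ)) := fun hc => hx (by simp [Fin.ext_iff, ← hc])
        simp [this]
      · simp
    · have h1 : ∀ x : Fin m, (jordanBlock F m 0 ^ k) i x * jordanBlock F m 0 x j = 0 := by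
        intro x
        rw [ih]
        have : ¬ ((i : ℕ) + k = (x : ℕ)) := by omega
        simp [this]
      simp only [h1, Finset.sum_const_zero]
      have : ¬ ((i : ℕ) + (k + 1) = (j : ℕ)) := by omega
      simp [this]

lemma shift_pow_eq_zero (m : ℕ) : (jordanBlock F m 0) ^ m = 0 := by
  ext i j
  rw [shift_pow]
  have : ¬ ((i : ℕ) + m = (j : ℕ)) := by omega
  simp [this]

variable {m : ℕ}

lemma kron_one_pow (A : Matrix (Fin m) (Fin m) F) (k : ℕ) :
    (A ⊗ₖ (1 : Matrix (Fin m) (Fin m) F)) ^ k = (A ^ k) ⊗ₖ (1 : Matrix (Fin m) (Fin m) F) := by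
  induction k with
  | zero => simp [Matrix.one_kronecker_one]
  | succ k ih => rw [pow_succ, ih, pow_succ, ← Matrix.mul_kronecker_mul, mul_one]

lemma one_kron_pow (A : Matrix (Fin m) (Fin m) F) (k : ℕ) :
    ((1 : Matrix (Fin m) (Fin m) F) ⊗ₖ A) ^ k = (1 : Matrix (Fin m) (Fin m) F) ⊗ₖ (A ^ k) := by
  induction k with
  | zero => simp [Matrix.one_kronecker_one]
  | succ k ih => rw [pow_succ, ih, pow_succ, ← Matrix.mul_kronecker_mul, mul_one]

lemma kron_commute (A B : Matrix (Fin m) (Fin m) F) :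
    Commute (A ⊗ₖ (1 : Matrix (Fin m) (Fin m) F)) ((1 : Matrix (Fin m) (Fin m) F) ⊗ₖ B) := by
  unfold Commute SemiconjBy
  rw [← Matrix.mul_kronecker_mul, ← Matrix.mul_kronecker_mul, mul_one, one_mul, mul_one, one_mul]

end aux

theorem stmt_13 (F : Type) [Field F] [CharP F 2] (a : ℕ) (lam mu : F)
    (hlam : lam ≠ 0) (hmu : mu ≠ 0) (hne : lam ≠ mu) :
    minpoly F
      (jordanBlock F (2 ^ (a + 1)) lam ⊗ₖ (1 : Matrix (Fin (2 ^ (a + 1))) (Fin (2 ^ (a + 1))) F) +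
       (1 : Matrix (Fin (2 ^ (a + 1))) (Fin (2 ^ (a + 1))) F) ⊗ₖ jordanBlock F (2 ^ (a + 1)) mu) =
      (X - C (lam + mu)) ^ 2 ^ (a + 1) := by
  haveI : Fact (Nat.Prime 2) := ⟨Nat.prime_two⟩
  set m := 2 ^ (a + 1) with hm
  have hm1 : 1 ≤ m := Nat.one_le_two_pow
  set N := jordanBlock F m 0 with hN
  set c := lam + mu with hc
  set K := jordanBlock F m lam ⊗ₖ (1 : Matrix (Fin m) (Fin m) F) +
       (1 : Matrix (Fin m) (Fin m) F) ⊗ₖ jordanBlock F m mu with hK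
  set M := N ⊗ₖ (1 : Matrix (Fin m) (Fin m) F) + (1 : Matrix (Fin m) (Fin m) F) ⊗ₖ N with hM
  -- K = c • 1 + M
  have hKM : K = c • 1 + M := by
    rw [hK, hM, jordanBlock_eq_smul_add F m lam, jordanBlock_eq_smul_add F m mu,
      Matrix.add_kronecker, Matrix.kronecker_add, Matrix.smul_kronecker,
      Matrix.kronecker_smul, Matrix.one_kronecker_one, hc, add_smul]
    abel
  have hKsub : K - c • 1 = M := by rw [hKM]; abel
  -- M ^ m = 0
  have hMm : M ^ m = 0 := by
    have h2 : M ^ 2 ^ (a + 1) = 0 := by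
      have hN0 : N ^ 2 ^ (a + 1) = 0 := shift_pow_eq_zero F m
      rw [hM, add_pow_char_pow_of_commute 2 (a + 1) (kron_commute F N N),
        kron_one_pow, one_kron_pow, hN0]
      simp
    exact h2
  -- aeval of (X - C c) ^ k
  have haeval : ∀ k : ℕ, aeval K ((X - C c) ^ k) = M ^ k := by
    intro k
    rw [map_pow, map_sub, aeval_X, aeval_C, Algebra.algebraMap_eq_smul_one, hKsub]
  -- minpoly divides (X - C c) ^ m
  have hdvd : minpoly F K ∣ (X - C c) ^ m := minpoly.dvd F K (by rw [haeval, hMm])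
  obtain ⟨i, him, hassoc⟩ := (dvd_prime_pow (prime_X_sub_C c) m).mp hdvd
  have hmin : minpoly F K = (X - C c) ^ i := by
    refine eq_of_monic_of_associated ?_ ((monic_X_sub_C c).pow i) hassoc
    exact minpoly.monic (Matrix.isIntegral K)
  -- expansion of M ^ (m - 1)
  have hexp : M ^ (m - 1) = ∑ k ∈ Finset.range (m - 1 + 1),
      (((m - 1).choose k : F)) • ((N ^ k) ⊗ₖ (N ^ (m - 1 - k))) := by
    rw [hM, (kron_commute F N N).add_pow]
    refine Finset.sum_congr rfl fun k _ => ?_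
    rw [kron_one_pow, one_kron_pow, ← Matrix.mul_kronecker_mul, mul_one, one_mul,
      Nat.cast_smul_eq_nsmul, nsmul_eq_mul]
    exact ((Nat.cast_commute _ _).eq).symm
  -- M ^ (m - 1) ≠ 0
  have hMne : M ^ (m - 1) ≠ 0 := by
    intro h0
    have hlast : m - 1 < m := by omega
    have h0lt : 0 < m := by omega
    have hent := congrFun (congrFun (hexp ▸ h0) (⟨0, h0lt⟩, ⟨0, h0lt⟩))
      (⟨m - 1, hlast⟩, ⟨0, h0lt⟩)
    simp only [hN, Matrix.sum_apply, Matrix.smul_apply, Matrix.kroneckerMap_apply,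
      shift_pow, Matrix.zero_apply, smul_eq_mul] at hent
    rw [Finset.sum_eq_single (m - 1)] at hent
    · simp at hent
    · intro k hk hkne
      simp only [Finset.mem_range] at hk
      have h : ¬ ((0 : ℕ) + k = m - 1) := by omega
      rw [if_neg h, zero_mul, mul_zero]
    · simp
  -- conclude i = m
  have : i = m := by
    by_contra hne'
    have hilt : i ≤ m - 1 := by omega
    have hMi : M ^ i = 0 := by rw [← haeval, ← hmin, minpoly.aeval]
    apply hMne
    calc M ^ (m - 1) = M ^ i * M ^ (m - 1 - i) := by rw [← pow_add]; congr 1; omega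
    _ = 0 := by rw [hMi, zero_mul]
  rw [hmin, this]
end

section
/- Over GF(2), for Jordan blocks J_a of size a and J_b of size b with equal eigenvalues (so the Kronecker sum is nilpotent plus scalar), the size h of the largest Jordan block of J_a ⊕ J_b satisfies max(a,b) ≤ h ≤ a + b − 1, and h = a + b − 1 if and only if the binomial coefficient C(a+b−2, a−1) is odd. -/
open Kronecker

def shiftM (F : Type) [Field F] (m : ℕ) : Matrix (Fin m) (Fin m) F :=
  Matrix.of fun i j => if (i : ℕ) + 1 = (j : ℕ) then 1 else 0

lemma shiftM_pow (F : Type) [Field F] (m k : ℕ) :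
    (shiftM F m) ^ k = Matrix.of (fun i j : Fin m => if (i : ℕ) + k = (j : ℕ) then (1 : F) else 0) := by
  induction k with
  | zero =>
    ext i j
    simp [Matrix.one_apply, Fin.ext_iff]
  | succ n ih =>
    ext i j
    rw [pow_succ, ih]
    simp only [Matrix.mul_apply, Matrix.of_apply, shiftM]
    by_cases hj : (i : ℕ) + (n + 1) = (j : ℕ)
    · rw [if_pos hj]
      have hlt : (i : ℕ) + n < m := by have := j.isLt; omega
      rw [Finset.sum_eq_single (⟨(i : ℕ) + n, hlt⟩ : Fin m)]
      · simp only [Fin.val_mk]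
        rw [if_pos (by omega : (i:ℕ) + n + 1 = (j:ℕ))]
        simp
      · intro l _ hl
        rw [if_neg, zero_mul]
        intro hc
        exact hl (Fin.ext hc.symm)
      · simp
    · rw [if_neg hj]
      apply Finset.sum_eq_zero
      intro l _
      split_ifs with h1 h2
      · exact absurd (by omega : (i:ℕ) + (n+1) = j) hj
      · rw [mul_zero]
      · rw [zero_mul]
      · rw [zero_mul]
lemma kron_pow_left (F : Type) [Field F] (a b : ℕ) (A : Matrix (Fin a) (Fin a) F) (k : ℕ) :
    (A ⊗ₖ (1 : Matrix (Fin b) (Fin b) F)) ^ k = (A ^ k) ⊗ₖ 1 := by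
  induction k with
  | zero => simp [Matrix.one_kronecker_one]
  | succ n ih => rw [pow_succ, pow_succ, ih, ← Matrix.mul_kronecker_mul, Matrix.one_mul]

lemma kron_pow_right (F : Type) [Field F] (a b : ℕ) (B : Matrix (Fin b) (Fin b) F) (k : ℕ) :
    ((1 : Matrix (Fin a) (Fin a) F) ⊗ₖ B) ^ k = (1 : Matrix (Fin a) (Fin a) F) ⊗ₖ (B ^ k) := by
  induction k with
  | zero => simp [Matrix.one_kronecker_one]
  | succ n ih => rw [pow_succ, pow_succ, ih, ← Matrix.mul_kronecker_mul, Matrix.one_mul]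

lemma entry_formula (F : Type) [Field F] (a b n : ℕ) (i i' : Fin a) (j j' : Fin b) :
    ((shiftM F a ⊗ₖ (1 : Matrix (Fin b) (Fin b) F) +
      (1 : Matrix (Fin a) (Fin a) F) ⊗ₖ shiftM F b) ^ n) (i, j) (i', j') =
    ∑ k ∈ Finset.range (n + 1), (n.choose k : F) *
      ((if (i : ℕ) + k = (i' : ℕ) then (1 : F) else 0) *
        (if (j : ℕ) + (n - k) = (j' : ℕ) then (1 : F) else 0)) := by
  have hc : Commute (shiftM F a ⊗ₖ (1 : Matrix (Fin b) (Fin b) F))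
      ((1 : Matrix (Fin a) (Fin a) F) ⊗ₖ shiftM F b) := by
    unfold Commute SemiconjBy
    rw [← Matrix.mul_kronecker_mul, ← Matrix.mul_kronecker_mul, Matrix.one_mul, Matrix.mul_one,
      Matrix.one_mul, Matrix.mul_one]
  rw [hc.add_pow]
  have hterm : ∀ k, (shiftM F a ⊗ₖ (1 : Matrix (Fin b) (Fin b) F)) ^ k *
      ((1 : Matrix (Fin a) (Fin a) F) ⊗ₖ shiftM F b) ^ (n - k) *
      (n.choose k : Matrix (Fin a × Fin b) (Fin a × Fin b) F)
      = (n.choose k) • ((shiftM F a ^ k) ⊗ₖ (shiftM F b ^ (n - k))) := by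
    intro k
    rw [kron_pow_left, kron_pow_right, ← Matrix.mul_kronecker_mul, Matrix.mul_one, Matrix.one_mul,
      nsmul_eq_mul]
    exact ((Nat.cast_commute (n.choose k) _).eq).symm
  simp only [hterm]
  rw [Matrix.sum_apply]
  apply Finset.sum_congr rfl
  intro k _
  rw [Matrix.smul_apply, shiftM_pow, shiftM_pow, Matrix.kroneckerMap_apply, Matrix.of_apply,
    Matrix.of_apply, nsmul_eq_mul]
lemma Mpow_ne_left (F : Type) [Field F] (a b n : ℕ) (hb : 0 < b) (hn : n < a) :
    (shiftM F a ⊗ₖ (1 : Matrix (Fin b) (Fin b) F) +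
      (1 : Matrix (Fin a) (Fin a) F) ⊗ₖ shiftM F b) ^ n ≠ 0 := by
  intro hzero
  have h0 : ((shiftM F a ⊗ₖ (1 : Matrix (Fin b) (Fin b) F) +
      (1 : Matrix (Fin a) (Fin a) F) ⊗ₖ shiftM F b) ^ n)
      (⟨0, by omega⟩, ⟨0, hb⟩) (⟨n, hn⟩, ⟨0, hb⟩) = 0 := by rw [hzero]; simp
  rw [entry_formula, Finset.sum_eq_single n] at h0
  · simp at h0
  · intro k hk hkn
    rw [if_neg (show ¬((⟨0, by omega⟩ : Fin a) : ℕ) + k = ((⟨n, hn⟩ : Fin a) : ℕ) from by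
      simpa using hkn), zero_mul, mul_zero]
  · intro hmem
    exact absurd (Finset.self_mem_range_succ n) hmem

lemma Mpow_ne_right (F : Type) [Field F] (a b n : ℕ) (ha : 0 < a) (hn : n < b) :
    (shiftM F a ⊗ₖ (1 : Matrix (Fin b) (Fin b) F) +
      (1 : Matrix (Fin a) (Fin a) F) ⊗ₖ shiftM F b) ^ n ≠ 0 := by
  intro hzero
  have h0 : ((shiftM F a ⊗ₖ (1 : Matrix (Fin b) (Fin b) F) +
      (1 : Matrix (Fin a) (Fin a) F) ⊗ₖ shiftM F b) ^ n)
      (⟨0, ha⟩, ⟨0, by omega⟩) (⟨0, ha⟩, ⟨n, hn⟩) = 0 := by rw [hzero]; simp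
  rw [entry_formula, Finset.sum_eq_single 0] at h0
  · simp at h0
  · intro k hk hkn
    rw [if_neg (show ¬((⟨0, ha⟩ : Fin a) : ℕ) + k = ((⟨0, ha⟩ : Fin a) : ℕ) from by
      simpa using hkn), zero_mul, mul_zero]
  · intro hmem
    exact absurd (Finset.mem_range.mpr (by omega)) hmem

lemma Mpow_top (F : Type) [Field F] (a b : ℕ) :
    (shiftM F a ⊗ₖ (1 : Matrix (Fin b) (Fin b) F) +
      (1 : Matrix (Fin a) (Fin a) F) ⊗ₖ shiftM F b) ^ (a + b - 1) = 0 := by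
  ext ⟨i, j⟩ ⟨i', j'⟩
  rw [entry_formula, Matrix.zero_apply]
  apply Finset.sum_eq_zero
  intro k hk
  have hi := i'.isLt
  have hj := j'.isLt
  have hk' := Finset.mem_range.mp hk
  by_cases h1 : (i : ℕ) + k = (i' : ℕ)
  · rw [if_neg (show ¬((j : ℕ) + (a + b - 1 - k) = (j' : ℕ)) from by omega), mul_zero, mul_zero]
  · rw [if_neg h1, zero_mul, mul_zero]

lemma Mpow_pen (F : Type) [Field F] [CharP F 2] (a b : ℕ) (ha : 1 ≤ a) (hb : 1 ≤ b) :
    (shiftM F a ⊗ₖ (1 : Matrix (Fin b) (Fin b) F) +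
      (1 : Matrix (Fin a) (Fin a) F) ⊗ₖ shiftM F b) ^ (a + b - 2) = 0 ↔
      ¬ Odd (Nat.choose (a + b - 2) (a - 1)) := by
  have hcast : (((a + b - 2).choose (a - 1) : F) = 0) ↔ ¬ Odd ((a + b - 2).choose (a - 1)) := by
    rw [CharP.cast_eq_zero_iff F 2, Nat.odd_iff]
    omega
  constructor
  · intro hzero
    rw [← hcast]
    have h0 : ((shiftM F a ⊗ₖ (1 : Matrix (Fin b) (Fin b) F) +
        (1 : Matrix (Fin a) (Fin a) F) ⊗ₖ shiftM F b) ^ (a + b - 2))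
        (⟨0, by omega⟩, ⟨0, by omega⟩) (⟨a - 1, by omega⟩, ⟨b - 1, by omega⟩) = 0 := by
      rw [hzero]; simp
    rw [entry_formula, Finset.sum_eq_single (a - 1)] at h0
    · rw [if_pos (show ((⟨0, by omega⟩ : Fin a) : ℕ) + (a - 1) = ((⟨a - 1, by omega⟩ : Fin a) : ℕ)
          from by simp),
        if_pos (show ((⟨0, by omega⟩ : Fin b) : ℕ) + (a + b - 2 - (a - 1)) =
          ((⟨b - 1, by omega⟩ : Fin b) : ℕ) from by simp; omega), mul_one, mul_one] at h0
      exact h0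
    · intro k hk hkn
      rw [if_neg (show ¬((⟨0, by omega⟩ : Fin a) : ℕ) + k = ((⟨a - 1, by omega⟩ : Fin a) : ℕ)
        from by simpa using hkn), zero_mul, mul_zero]
    · intro hmem
      exact absurd (Finset.mem_range.mpr (by omega)) hmem
  · intro hodd
    have hc : ((a + b - 2).choose (a - 1) : F) = 0 := hcast.mpr hodd
    ext ⟨i, j⟩ ⟨i', j'⟩
    rw [entry_formula, Matrix.zero_apply]
    apply Finset.sum_eq_zero
    intro k hk
    by_cases h1 : (i : ℕ) + k = (i' : ℕ)
    · by_cases h2 : (j : ℕ) + (a + b - 2 - k) = (j' : ℕ)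
      · have hka : k = a - 1 := by
          have hi := i'.isLt
          have hj := j'.isLt
          have hk' := Finset.mem_range.mp hk
          omega
        rw [hka, hc, zero_mul]
      · rw [if_neg h2, mul_zero, mul_zero]
    · rw [if_neg h1, zero_mul, mul_zero]
lemma jordanBlock_eq (F : Type) [Field F] (m : ℕ) (l : F) :
    jordanBlock F m l = l • (1 : Matrix (Fin m) (Fin m) F) + shiftM F m := by
  ext i j
  simp only [jordanBlock, shiftM, Matrix.of_apply, Matrix.add_apply, Matrix.smul_apply,
    Matrix.one_apply, smul_eq_mul]
  by_cases hij : i = j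
  · subst hij
    rw [if_pos rfl, if_pos rfl, mul_one, if_neg (by omega), add_zero]
  · rw [if_neg hij, if_neg hij, mul_zero, zero_add]

theorem stmt_15 (F : Type) [Field F] [CharP F 2] (a b : ℕ) (ha : 1 ≤ a) (hb : 1 ≤ b)
    (lam : F) (h : ℕ)
    (hh : IsLeast {h : ℕ | 0 < h ∧
      (jordanBlock F a lam ⊗ₖ (1 : Matrix (Fin b) (Fin b) F) +
        (1 : Matrix (Fin a) (Fin a) F) ⊗ₖ jordanBlock F b lam -
        (lam + lam) • (1 : Matrix (Fin a × Fin b) (Fin a × Fin b) F)) ^ h = 0} h) :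
    max a b ≤ h ∧ h ≤ a + b - 1 ∧ (h = a + b - 1 ↔ Odd (Nat.choose (a + b - 2) (a - 1))) := by
  have h2 : (lam + lam : F) = 0 := CharTwo.add_self_eq_zero lam
  have hM : jordanBlock F a lam ⊗ₖ (1 : Matrix (Fin b) (Fin b) F) +
        (1 : Matrix (Fin a) (Fin a) F) ⊗ₖ jordanBlock F b lam -
        (lam + lam) • (1 : Matrix (Fin a × Fin b) (Fin a × Fin b) F)
      = shiftM F a ⊗ₖ (1 : Matrix (Fin b) (Fin b) F) +
        (1 : Matrix (Fin a) (Fin a) F) ⊗ₖ shiftM F b := by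
    rw [jordanBlock_eq, jordanBlock_eq, Matrix.add_kronecker, Matrix.kronecker_add,
      Matrix.smul_kronecker, Matrix.kronecker_smul, Matrix.one_kronecker_one, h2, zero_smul,
      sub_zero]
    rw [show lam • (1 : Matrix (Fin a × Fin b) (Fin a × Fin b) F) + shiftM F a ⊗ₖ 1 +
        (lam • 1 + 1 ⊗ₖ shiftM F b)
        = (lam + lam) • (1 : Matrix (Fin a × Fin b) (Fin a × Fin b) F) +
          (shiftM F a ⊗ₖ 1 + 1 ⊗ₖ shiftM F b) from by rw [add_smul]; abel,
      h2, zero_smul, zero_add]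
  rw [hM] at hh
  obtain ⟨⟨hpos, hMh⟩, hlb⟩ := hh
  have hub : h ≤ a + b - 1 := hlb ⟨by omega, Mpow_top F a b⟩
  have hA : a ≤ h := by
    by_contra hc
    push_neg at hc
    exact Mpow_ne_left F a b h hb hc hMh
  have hB : b ≤ h := by
    by_contra hc
    push_neg at hc
    exact Mpow_ne_right F a b h ha hc hMh
  refine ⟨max_le hA hB, hub, ?_, ?_⟩
  · intro heq
    by_contra hodd
    by_cases hab : a + b - 2 = 0
    · have : a = 1 ∧ b = 1 := by omega
      rw [hab, this.1] at hodd
      simp at hodd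
    · have := hlb ⟨by omega, (Mpow_pen F a b ha hb).mpr hodd⟩
      omega
  · intro hodd
    by_contra hne
    have hle : h ≤ a + b - 2 := by omega
    have hz : (shiftM F a ⊗ₖ (1 : Matrix (Fin b) (Fin b) F) +
        (1 : Matrix (Fin a) (Fin a) F) ⊗ₖ shiftM F b) ^ (a + b - 2) = 0 := by
      have heq : (shiftM F a ⊗ₖ (1 : Matrix (Fin b) (Fin b) F) +
          (1 : Matrix (Fin a) (Fin a) F) ⊗ₖ shiftM F b) ^ (a + b - 2)
          = (shiftM F a ⊗ₖ (1 : Matrix (Fin b) (Fin b) F) +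
            (1 : Matrix (Fin a) (Fin a) F) ⊗ₖ shiftM F b) ^ h *
            (shiftM F a ⊗ₖ (1 : Matrix (Fin b) (Fin b) F) +
            (1 : Matrix (Fin a) (Fin a) F) ⊗ₖ shiftM F b) ^ (a + b - 2 - h) := by
        rw [← pow_add]; congr 1; omega
      rw [heq, hMh, Matrix.zero_mul]
    exact ((Mpow_pen F a b ha hb).mp hz) hodd
end

section
/- If a − 1 and b − 1 have no common 1 bits in their binary expansions (i.e., C(a+b−2, a−1) is odd), then the Kronecker sum of two Jordan blocks of sizes a and b with equal eigenvalues over a field of characteristic 2 has a Jordan block of the maximal possible size a + b − 1. -/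
open Kronecker

lemma jb_pow_apply (F : Type) [Field F] (m k : ℕ) (i j : Fin m) :
    ((jordanBlock F m 0) ^ k) i j = if (i : ℕ) + k = (j : ℕ) then 1 else 0 := by
  induction k generalizing j with
  | zero => simp [Matrix.one_apply, Fin.ext_iff]
  | succ k ih =>
    rw [pow_succ, Matrix.mul_apply]
    by_cases hj : (i : ℕ) + (k + 1) = (j : ℕ)
    · have hlt : (i : ℕ) + k < m := by omega
      rw [Finset.sum_eq_single (⟨(i : ℕ) + k, hlt⟩ : Fin m), if_pos hj]
      · rw [ih]
        simp only [jordanBlock, Matrix.of_apply]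
        have h2 : (⟨(i : ℕ) + k, hlt⟩ : Fin m) ≠ j := by
          intro h
          have hv : (i : ℕ) + k = (j : ℕ) := congrArg Fin.val h
          omega
        rw [if_pos trivial,
          if_neg h2, if_pos (show (((⟨(i : ℕ) + k, hlt⟩ : Fin m)) : ℕ) + 1 = (j : ℕ) by
            show (i : ℕ) + k + 1 = (j : ℕ); omega), one_mul]
      · intro x _ hx
        rw [ih, if_neg (fun h => hx (Fin.ext h.symm)), zero_mul]
      · intro h; exact absurd (Finset.mem_univ _) h
    · rw [if_neg hj]
      apply Finset.sum_eq_zero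
      intro x _
      rw [ih]
      simp only [jordanBlock, Matrix.of_apply]
      split_ifs with h1 h2 h3
      · exact mul_zero 1
      · exact absurd (show (i : ℕ) + (k + 1) = (j : ℕ) by omega) hj
      · exact mul_zero 1
      all_goals exact zero_mul _

lemma jb_pow_zero (F : Type) [Field F] (m k : ℕ) (hk : m ≤ k) :
    (jordanBlock F m 0) ^ k = 0 := by
  ext i j
  rw [jb_pow_apply, Matrix.zero_apply, if_neg (by have := j.isLt; omega)]

lemma kronL (F : Type) [Field F] (a b : ℕ) (M : Matrix (Fin a) (Fin a) F) (k : ℕ) :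
    (M ⊗ₖ (1 : Matrix (Fin b) (Fin b) F)) ^ k = (M ^ k) ⊗ₖ 1 := by
  induction k with
  | zero => rw [pow_zero, pow_zero, Matrix.one_kronecker_one]
  | succ k ih => rw [pow_succ, pow_succ, ih, ← Matrix.mul_kronecker_mul, one_mul]

lemma kronR (F : Type) [Field F] (a b : ℕ) (M : Matrix (Fin b) (Fin b) F) (k : ℕ) :
    ((1 : Matrix (Fin a) (Fin a) F) ⊗ₖ M) ^ k = (1 : Matrix (Fin a) (Fin a) F) ⊗ₖ (M ^ k) := by
  induction k with
  | zero => rw [pow_zero, pow_zero, Matrix.one_kronecker_one]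
  | succ k ih => rw [pow_succ, pow_succ, ih, ← Matrix.mul_kronecker_mul, one_mul]

theorem stmt_16 (F : Type) [Field F] [CharP F 2] (a b : ℕ) (ha : 1 ≤ a) (hb : 1 ≤ b)
    (lam : F) (hodd : Odd (Nat.choose (a + b - 2) (a - 1))) :
    IsLeast {h : ℕ | 0 < h ∧
      (jordanBlock F a lam ⊗ₖ (1 : Matrix (Fin b) (Fin b) F) +
        (1 : Matrix (Fin a) (Fin a) F) ⊗ₖ jordanBlock F b lam -
        (lam + lam) • 1) ^ h = 0} (a + b - 1) := by
  set Sa := jordanBlock F a (0 : F) with hSa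
  set Sb := jordanBlock F b (0 : F) with hSb
  set A : Matrix (Fin a × Fin b) (Fin a × Fin b) F := Sa ⊗ₖ 1 with hA
  set B : Matrix (Fin a × Fin b) (Fin a × Fin b) F := (1 : Matrix (Fin a) (Fin a) F) ⊗ₖ Sb with hB
  have hjb : ∀ (m : ℕ), jordanBlock F m lam = lam • 1 + jordanBlock F m 0 := by
    intro m
    ext i j
    by_cases h : i = j <;>
      simp [jordanBlock, Matrix.one_apply, h]
  have hN : jordanBlock F a lam ⊗ₖ (1 : Matrix (Fin b) (Fin b) F) +
        (1 : Matrix (Fin a) (Fin a) F) ⊗ₖ jordanBlock F b lam -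
        (lam + lam) • 1 = A + B := by
    rw [hjb a, hjb b, CharTwo.add_self_eq_zero, zero_smul, sub_zero,
      Matrix.add_kronecker, Matrix.kronecker_add, Matrix.smul_kronecker,
      Matrix.kronecker_smul, Matrix.one_kronecker_one]
    rw [hA, hB]
    abel_nf
    rw [two_smul, ← add_smul, CharTwo.add_self_eq_zero lam, zero_smul, zero_add]
  have hcomm : Commute A B := by
    rw [hA, hB]
    show _ * _ = _ * _
    rw [← Matrix.mul_kronecker_mul, ← Matrix.mul_kronecker_mul, one_mul, mul_one, one_mul, mul_one]
  have hABk : ∀ k l : ℕ, A ^ k * B ^ l = (Sa ^ k) ⊗ₖ (Sb ^ l) := by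
    intro k l
    rw [hA, hB, kronL, kronR, ← Matrix.mul_kronecker_mul, one_mul, mul_one]
  -- N^(a+b-2) is nonzero
  have hne : (A + B) ^ (a + b - 2) ≠ 0 := by
    intro h0
    have hentry := congrFun (congrFun h0 ((⟨0, by omega⟩ : Fin a), (⟨0, by omega⟩ : Fin b)))
      ((⟨a - 1, by omega⟩ : Fin a), (⟨b - 1, by omega⟩ : Fin b))
    rw [hcomm.add_pow] at hentry
    simp only [Matrix.sum_apply, Matrix.zero_apply] at hentry
    rw [Finset.sum_eq_single (a - 1)] at hentry
    · rw [← (Nat.cast_commute ((a + b - 2).choose (a - 1))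
          (A ^ (a - 1) * B ^ (a + b - 2 - (a - 1)))).eq, ← nsmul_eq_mul, Matrix.smul_apply,
        hABk, Matrix.kronecker_apply, jb_pow_apply, jb_pow_apply] at hentry
      rw [if_pos (by simp only [Fin.val_mk]; omega), if_pos (by simp only [Fin.val_mk]; omega),
        mul_one, nsmul_eq_mul, mul_one] at hentry
      obtain ⟨c, hc⟩ := hodd
      rw [hc] at hentry
      push_cast at hentry
      rw [show ((2 : F)) = 0 by exact_mod_cast CharP.cast_eq_zero F 2] at hentry
      simp at hentry
    · intro k hk hka
      rw [← (Nat.cast_commute ((a + b - 2).choose k)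
          (A ^ k * B ^ (a + b - 2 - k))).eq, ← nsmul_eq_mul, Matrix.smul_apply,
        hABk, Matrix.kronecker_apply, jb_pow_apply, jb_pow_apply]
      rw [if_neg (by simp only [Fin.val_mk]; omega), zero_mul, smul_zero]
    · intro h
      exact absurd (Finset.mem_range.mpr (by omega)) h
  constructor
  · refine ⟨by omega, ?_⟩
    rw [hN, hcomm.add_pow]
    apply Finset.sum_eq_zero
    intro k hk
    rw [hABk]
    rcases le_or_gt a k with h | h
    · rw [jb_pow_zero F a k h, Matrix.zero_kronecker, zero_mul]
    · rw [jb_pow_zero F b _ (by omega), Matrix.kronecker_zero, zero_mul]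
  · rintro h ⟨hpos, hzero⟩
    by_contra hlt
    push_neg at hlt
    rw [hN] at hzero
    apply hne
    have : (A + B) ^ (a + b - 2) = (A + B) ^ h * (A + B) ^ (a + b - 2 - h) := by
      rw [← pow_add]; congr 1; omega
    rw [this, hzero, zero_mul]
end

section
/- The eigenvalues of the Kronecker sum A ⊗ I + I ⊗ B of two square matrices A (n×n) and B (m×m) over an algebraically closed field are exactly all sums μ + θ where μ is an eigenvalue of A and θ is an eigenvalue of B. -/
/-!
A vector is an eigenvector of `A ⊗ₖ 1 + 1 ⊗ₖ B` with eigenvalue `r` exactly when it is the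
vectorization of a nonzero `S` with `B * S + S * Aᵀ = r • S`. Outer products of eigenvectors of
`B` and `A` give every sum `μ + θ`. Conversely `(r - B) * S = S * Aᵀ`, and a nonzero solution of a
Sylvester equation `P * S = S * Q` forces `P` and `Q` to share an eigenvalue: by Cayley–Hamilton
`χ_Q(P) * S = S * χ_Q(Q) = 0`, so `χ_Q(P)` is singular, and by spectral mapping `χ_Q` vanishes at
an eigenvalue of `P`.
-/

open Kronecker Matrix

namespace Matrix

variable {ι κ : Type*} [Fintype ι] [DecidableEq ι] [Fintype κ] [DecidableEq κ]

section CommRing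

variable {R : Type*} [CommRing R]

theorem spectrum_transpose (M : Matrix ι ι R) : spectrum R Mᵀ = spectrum R M := by
  ext
  simp only [mem_spectrum_iff_not_isUnit_eval_charpoly, charpoly_transpose]

theorem pow_mul_eq_mul_pow_of_mul_eq_mul {A : Matrix ι ι R} {B : Matrix κ κ R}
    {S : Matrix ι κ R} (h : A * S = S * B) (k : ℕ) : A ^ k * S = S * B ^ k := by
  induction k with
  | zero => simp
  | succ k ih =>
    rw [pow_succ, pow_succ, Matrix.mul_assoc, h, ← Matrix.mul_assoc, ih, Matrix.mul_assoc]

theorem aeval_mul_eq_mul_aeval_of_mul_eq_mul {A : Matrix ι ι R} {B : Matrix κ κ R}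
    {S : Matrix ι κ R} (h : A * S = S * B) (p : Polynomial R) :
    Polynomial.aeval A p * S = S * Polynomial.aeval B p := by
  simp only [Polynomial.aeval_eq_sum_range, Matrix.sum_mul, Matrix.mul_sum, Matrix.smul_mul,
    Matrix.mul_smul, pow_mul_eq_mul_pow_of_mul_eq_mul h]

theorem kroneckerSum_mulVec_vec (A : Matrix ι ι R) (B : Matrix κ κ R) (S : Matrix κ ι R) :
    (A ⊗ₖ 1 + 1 ⊗ₖ B) *ᵥ vec S = vec (B * S + S * Aᵀ) := by
  rw [add_mulVec, kronecker_mulVec_vec, kronecker_mulVec_vec, transpose_one, Matrix.mul_one,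
    Matrix.one_mul, vec_add, add_comm]

end CommRing

variable {K : Type*} [Field K]

theorem mem_spectrum_iff_exists_mulVec_eq_smul (M : Matrix ι ι K) (r : K) :
    r ∈ spectrum K M ↔ ∃ v ≠ 0, M *ᵥ v = r • v := by
  simp only [← spectrum_toLin', ← Module.End.hasEigenvalue_iff_mem_spectrum,
    Module.End.hasEigenvalue_iff, Submodule.ne_bot_iff, Module.End.mem_eigenspace_iff,
    toLin'_apply]
  exact ⟨fun ⟨v, hv, hv0⟩ => ⟨v, hv0, hv⟩, fun ⟨v, hv0, hv⟩ => ⟨v, hv, hv0⟩⟩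

theorem exists_mem_spectrum_of_mul_eq_mul [IsAlgClosed K] {A : Matrix ι ι K}
    {B : Matrix κ κ K} {S : Matrix ι κ K} (hS : S ≠ 0) (h : A * S = S * B) :
    ∃ μ ∈ spectrum K A, μ ∈ spectrum K B := by
  have hchar : Polynomial.aeval A B.charpoly * S = 0 := by
    rw [aeval_mul_eq_mul_aeval_of_mul_eq_mul h, aeval_self_charpoly, Matrix.mul_zero]
  have hsingular : ¬IsUnit (Polynomial.aeval A B.charpoly) := by
    intro hunit
    obtain ⟨T, hT⟩ := hunit.exists_left_inv
    exact hS (by rw [← Matrix.one_mul S, ← hT, Matrix.mul_assoc, hchar, Matrix.mul_zero])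
  have hκ : Nonempty κ := by
    by_contra hκ
    exact hS (ext fun _ j => (hκ ⟨j⟩).elim)
  have hdeg : 0 < B.charpoly.degree := by
    rw [charpoly_degree_eq_dim]
    exact_mod_cast Fintype.card_pos
  obtain ⟨μ, hμ, hroot⟩ := spectrum.map_polynomial_aeval_of_degree_pos A B.charpoly hdeg ▸
    (spectrum.zero_mem_iff K).2 hsingular
  exact ⟨μ, hμ, mem_spectrum_iff_isRoot_charpoly.2 hroot⟩

theorem mem_spectrum_kroneckerSum_iff (A : Matrix ι ι K) (B : Matrix κ κ K) (r : K) :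
    r ∈ spectrum K (A ⊗ₖ 1 + 1 ⊗ₖ B) ↔ ∃ S : Matrix κ ι K, S ≠ 0 ∧ B * S + S * Aᵀ = r • S := by
  rw [mem_spectrum_iff_exists_mulVec_eq_smul, vec_bijective.surjective.exists]
  simp only [kroneckerSum_mulVec_vec, ← vec_smul, vec_inj, ne_eq, vec_eq_zero_iff]

theorem add_mem_spectrum_kroneckerSum {A : Matrix ι ι K} {B : Matrix κ κ K} {μ θ : K}
    (hμ : μ ∈ spectrum K A) (hθ : θ ∈ spectrum K B) :
    μ + θ ∈ spectrum K (A ⊗ₖ 1 + 1 ⊗ₖ B) := by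
  obtain ⟨x, hx0, hx⟩ := (mem_spectrum_iff_exists_mulVec_eq_smul A μ).1 hμ
  obtain ⟨y, hy0, hy⟩ := (mem_spectrum_iff_exists_mulVec_eq_smul B θ).1 hθ
  have hS : vecMulVec y x ≠ 0 := by
    obtain ⟨i, hi⟩ := Function.ne_iff.1 hx0
    obtain ⟨j, hj⟩ := Function.ne_iff.1 hy0
    exact fun h => mul_ne_zero hj hi congr($h j i)
  refine (mem_spectrum_kroneckerSum_iff A B _).2 ⟨vecMulVec y x, hS, ?_⟩
  rw [mul_vecMulVec, vecMulVec_mul, vecMul_transpose, hx, hy, smul_vecMulVec, vecMulVec_smul,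
    add_smul, add_comm]

theorem spectrum_kroneckerSum_subset [IsAlgClosed K] (A : Matrix ι ι K) (B : Matrix κ κ K) :
    spectrum K (A ⊗ₖ 1 + 1 ⊗ₖ B) ⊆ Set.image2 (· + ·) (spectrum K A) (spectrum K B) := by
  intro r hr
  obtain ⟨S, hS, hsylvester⟩ := (mem_spectrum_kroneckerSum_iff A B r).1 hr
  have h : (algebraMap K _ r - B) * S = S * Aᵀ := by
    rw [Matrix.sub_mul, Algebra.algebraMap_eq_smul_one, Matrix.smul_mul, Matrix.one_mul,
      ← hsylvester, add_sub_cancel_left]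
  obtain ⟨μ, hμB, hμA⟩ := exists_mem_spectrum_of_mul_eq_mul hS h
  rw [← spectrum.singleton_sub_eq] at hμB
  obtain ⟨_, rfl, θ, hθ, rfl⟩ := hμB
  exact ⟨_, spectrum_transpose A ▸ hμA, θ, hθ, sub_add_cancel _ θ⟩

end Matrix

theorem stmt_17 (F : Type) [Field F] [IsAlgClosed F] (n m : ℕ)
    (A : Matrix (Fin n) (Fin n) F) (B : Matrix (Fin m) (Fin m) F) :
    spectrum F (A ⊗ₖ (1 : Matrix (Fin m) (Fin m) F) + (1 : Matrix (Fin n) (Fin n) F) ⊗ₖ B) =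
      Set.image2 (· + ·) (spectrum F A) (spectrum F B) :=
  (spectrum_kroneckerSum_subset A B).antisymm
    (Set.image2_subset_iff.2 fun _ hμ _ hθ => add_mem_spectrum_kroneckerSum hμ hθ)
end

section
/- Let F be a field of characteristic 2 and α ∈ F an element of odd order b ≥ 7. Let λ_i = α^i + α^(−i) for 1 ≤ i ≤ (b−1)/2 be the distinct nonzero values. Then the subgroup of F^× generated by the set of all sums λ_i + λ_j with i ≠ j (taking only nonzero sums) equals the subgroup generated by the set of all λ_i. (Hence the lcm of the orders of the pairwise sums equals the lcm of the orders of the λ_i.) -/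
variable {F : Type} [Field F]

/-- `stmt18_lam α m = α^m + α^(-m)`. -/
def stmt18_lam (α : F) (m : ℤ) : F := α ^ m + α ^ (-m)

theorem lam_neg (α : F) (m : ℤ) : stmt18_lam α (-m) = stmt18_lam α m := by
  simp [stmt18_lam, add_comm]

theorem lam_add_mul {α : F} {b : ℕ} (hα0 : α ≠ 0) (hb : α ^ (b:ℤ) = 1) (m k : ℤ) :
    stmt18_lam α (m + b * k) = stmt18_lam α m := by
  simp [stmt18_lam, zpow_add₀ hα0, zpow_mul, hb, neg_add]

theorem lam_congr {α : F} {b : ℕ} (hα0 : α ≠ 0) (hb : α ^ (b:ℤ) = 1)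
    {m n : ℤ} (h : (b:ℤ) ∣ (m - n) ∨ (b:ℤ) ∣ (m + n)) : stmt18_lam α m = stmt18_lam α n := by
  rcases h with ⟨k, hk⟩ | ⟨k, hk⟩
  · have hm : m = n + b * k := by linarith
    rw [hm, lam_add_mul hα0 hb]
  · have hm : -m = n + b * (-k) := by linarith
    rw [← lam_neg α m, hm, lam_add_mul hα0 hb]

theorem lam_mul {α : F} (hα0 : α ≠ 0) (p q : ℤ) :
    stmt18_lam α p * stmt18_lam α q = stmt18_lam α (p + q) + stmt18_lam α (p - q) := by
  simp only [stmt18_lam, zpow_add₀ hα0, zpow_sub₀ hα0, zpow_neg, neg_add, neg_sub]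
  field_simp
  ring

theorem lam_zero [CharP F 2] (α : F) : stmt18_lam α 0 = 0 := by
  simp only [stmt18_lam, neg_zero, zpow_zero]
  exact CharTwo.add_self_eq_zero 1

theorem lam_sq [CharP F 2] {α : F} (hα0 : α ≠ 0) (m : ℤ) :
    stmt18_lam α m * stmt18_lam α m = stmt18_lam α (2 * m) := by
  rw [lam_mul hα0, sub_self, lam_zero, add_zero, two_mul]

theorem stmt_18 (F : Type) [Field F] [CharP F 2] (b : ℕ) (hb : Odd b) (hb7 : 7 ≤ b)
    (α : F) (hα : orderOf α = b) :
    Subgroup.closure {u : Fˣ | ∃ i j : ℕ, 1 ≤ i ∧ i ≤ (b - 1) / 2 ∧ 1 ≤ j ∧ j ≤ (b - 1) / 2 ∧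
        i ≠ j ∧ (u : F) = (α ^ i + α⁻¹ ^ i) + (α ^ j + α⁻¹ ^ j)} =
      Subgroup.closure {u : Fˣ | ∃ i : ℕ, 1 ≤ i ∧ i ≤ (b - 1) / 2 ∧
        (u : F) = α ^ i + α⁻¹ ^ i} := by
  have hbm2 : b % 2 = 1 := Nat.odd_iff.mp hb
  have hb1 : α ^ b = 1 := by rw [← hα]; exact pow_orderOf_eq_one α
  have hα0 : α ≠ 0 := by
    intro h
    rw [h, zero_pow (by omega : b ≠ 0)] at hb1
    exact zero_ne_one hb1
  have hbz : α ^ (b:ℤ) = 1 := by rw [zpow_natCast]; exact hb1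
  -- the order of the unit version
  have horderu : orderOf (Units.mk0 α hα0) = b := by
    have h' : orderOf (Units.mk0 α hα0) = orderOf α := by rw [← orderOf_units]; rfl
    rw [h', hα]
  -- `b ∣ 2m → b ∣ m`
  have hd2 : ∀ m : ℤ, (b:ℤ) ∣ 2 * m → (b:ℤ) ∣ m := by
    intro m hm
    have hcop : IsCoprime (b:ℤ) 2 := by
      rw [Int.isCoprime_iff_gcd_eq_one]
      have : Nat.gcd b 2 = 1 := Nat.coprime_two_right.mpr hb
      simpa [Int.gcd] using this
    exact hcop.dvd_of_dvd_mul_left hm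
  -- nonvanishing
  have hne : ∀ m : ℤ, ¬ (b:ℤ) ∣ m → stmt18_lam α m ≠ 0 := by
    intro m hm h0
    apply hm
    apply hd2
    have h1 : α ^ m = α ^ (-m) := by
      have := eq_neg_of_add_eq_zero_left h0
      rwa [CharTwo.neg_eq] at this
    have h2 : α ^ (2 * m) = 1 := by
      rw [two_mul, zpow_add₀ hα0]
      nth_rewrite 2 [h1]
      rw [← zpow_add₀ hα0]
      simp
    have h3 : (Units.mk0 α hα0) ^ (2 * m) = 1 := by
      ext
      rw [Units.val_zpow_eq_zpow_val]
      simpa using h2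
    have := orderOf_dvd_iff_zpow_eq_one.mpr h3
    rwa [horderu] at this
  -- reduction to the canonical range
  have hred : ∀ m : ℤ, ¬ (b:ℤ) ∣ m → ∃ i : ℕ, 1 ≤ i ∧ i ≤ (b-1)/2 ∧ stmt18_lam α m = stmt18_lam α i ∧
      ((b:ℤ) ∣ ((i:ℤ) - m) ∨ (b:ℤ) ∣ ((i:ℤ) + m)) := by
    intro m hm
    have hb0 : (0:ℤ) < b := by positivity
    have hr0 : 0 ≤ m % b := Int.emod_nonneg m (by omega)
    have hrb : m % b < b := Int.emod_lt_of_pos m hb0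
    set r : ℕ := (m % b).toNat with hrdef
    have hrz : (r:ℤ) = m % b := Int.toNat_of_nonneg hr0
    have hdvd_rm : (b:ℤ) ∣ ((r:ℤ) - m) := by
      refine ⟨-(m / b), ?_⟩
      rw [hrz, Int.emod_def]
      ring
    have hrne : r ≠ 0 := by
      intro h
      apply hm
      have : m % b = 0 := by omega
      exact Int.dvd_of_emod_eq_zero this
    by_cases hcase : r ≤ (b-1)/2
    · exact ⟨r, by omega, hcase, (lam_congr hα0 hbz (Or.inl hdvd_rm)).symm, Or.inl hdvd_rm⟩
    · refine ⟨b - r, by omega, by omega, ?_, ?_⟩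
      · have h1 : ((b - r : ℕ) : ℤ) + m = ((b:ℤ) - r) + m := by
          push_cast [Nat.cast_sub (by omega : r ≤ b)]; ring
        have h2 : (b:ℤ) ∣ (((b - r : ℕ) : ℤ) + m) := by
          rw [h1]
          have : ((b:ℤ) - r) + m = (b:ℤ) - ((r:ℤ) - m) := by ring
          rw [this]
          exact dvd_sub (dvd_refl _) hdvd_rm
        exact (lam_congr hα0 hbz (Or.inr h2)).symm
      · right
        have h1 : ((b - r : ℕ) : ℤ) + m = ((b:ℤ) - r) + m := by
          push_cast [Nat.cast_sub (by omega : r ≤ b)]; ring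
        rw [h1]
        have : ((b:ℤ) - r) + m = (b:ℤ) - ((r:ℤ) - m) := by ring
        rw [this]
        exact dvd_sub (dvd_refl _) hdvd_rm
  -- form conversion
  have hform : ∀ i : ℕ, α ^ i + α⁻¹ ^ i = stmt18_lam α (i:ℤ) := by
    intro i
    simp [stmt18_lam, inv_pow, zpow_neg, zpow_natCast]
  -- not divisible lemmas
  have hndvd : ∀ n : ℤ, 0 < n → n < b → ¬ (b:ℤ) ∣ n := by
    intro n h1 h2 hd
    exact absurd (Int.le_of_dvd h1 hd) (by omega)
  set S : Set Fˣ := {u : Fˣ | ∃ i j : ℕ, 1 ≤ i ∧ i ≤ (b - 1) / 2 ∧ 1 ≤ j ∧ j ≤ (b - 1) / 2 ∧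
        i ≠ j ∧ (u : F) = (α ^ i + α⁻¹ ^ i) + (α ^ j + α⁻¹ ^ j)} with hS
  set T : Set Fˣ := {u : Fˣ | ∃ i : ℕ, 1 ≤ i ∧ i ≤ (b - 1) / 2 ∧
        (u : F) = α ^ i + α⁻¹ ^ i} with hT
  -- pair products lie in S
  have hpairS : ∀ i j : ℕ, 1 ≤ i → i ≤ (b-1)/2 → 1 ≤ j → j ≤ (b-1)/2 → i ≠ j →
      ∀ u : Fˣ, (u:F) = stmt18_lam α i * stmt18_lam α j → u ∈ S := by
    intro i j hi1 hi2 hj1 hj2 hij u hu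
    have hsum : ¬ (b:ℤ) ∣ ((i:ℤ) + j) := hndvd _ (by omega) (by omega)
    have hdiff : ¬ (b:ℤ) ∣ ((i:ℤ) - j) := by
      intro hd
      rcases le_or_gt (i:ℤ) j with h | h
      · have h' := dvd_neg.mpr hd
        rw [neg_sub] at h'
        have hij' : (i:ℤ) ≠ j := fun h' => hij (by exact_mod_cast h')
        exact hndvd ((j:ℤ) - i) (by omega) (by omega) h'
      · exact hndvd ((i:ℤ) - j) (by omega) (by omega) hd
    obtain ⟨p, hp1, hp2, hp3, hp4⟩ := hred _ hsum
    obtain ⟨q, hq1, hq2, hq3, hq4⟩ := hred _ hdiff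
    have hpq : p ≠ q := by
      intro h
      subst h
      have h2ij : (b:ℤ) ∣ 2 * i ∨ (b:ℤ) ∣ 2 * j := by
        rcases hp4 with h4 | h4 <;> rcases hq4 with h5 | h5
        · right
          have := dvd_sub h5 h4
          have he : ((p:ℤ) - ((i:ℤ) - j)) - ((p:ℤ) - ((i:ℤ) + j)) = 2 * j := by ring
          rwa [he] at this
        · left
          have := dvd_sub h5 h4
          have he : ((p:ℤ) + ((i:ℤ) - j)) - ((p:ℤ) - ((i:ℤ) + j)) = 2 * i := by ring
          rwa [he] at this
        · left
          have := dvd_sub h4 h5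
          have he : ((p:ℤ) + ((i:ℤ) + j)) - ((p:ℤ) - ((i:ℤ) - j)) = 2 * i := by ring
          rwa [he] at this
        · right
          have := dvd_sub h4 h5
          have he : ((p:ℤ) + ((i:ℤ) + j)) - ((p:ℤ) + ((i:ℤ) - j)) = 2 * j := by ring
          rwa [he] at this
      rcases h2ij with h | h
      · exact hndvd (i:ℤ) (by omega) (by omega) (hd2 _ h)
      · exact hndvd (j:ℤ) (by omega) (by omega) (hd2 _ h)
    refine ⟨p, q, hp1, hp2, hq1, hq2, hpq, ?_⟩
    rw [hform, hform, ← hp3, ← hq3, hu, lam_mul hα0]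
  -- the unit with value `stmt18_lam α 1`
  have hne1 : stmt18_lam α (1:ℤ) ≠ 0 := hne 1 (hndvd 1 one_pos (by omega))
  set u1 : Fˣ := Units.mk0 _ hne1 with hu1
  have hl2 : stmt18_lam α 2 = stmt18_lam α 1 * stmt18_lam α 1 := by rw [lam_sq hα0]; norm_num
  have hl4 : stmt18_lam α 4 = stmt18_lam α 1 * stmt18_lam α 1 * (stmt18_lam α 1 * stmt18_lam α 1) := by
    rw [← hl2, lam_sq hα0]; norm_num
  have hu1mem : u1 ∈ Subgroup.closure S := by
    -- u1 = u12^2 * u14⁻¹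
    have hne2 : stmt18_lam α (2:ℤ) ≠ 0 := hne 2 (hndvd 2 (by norm_num) (by omega))
    obtain ⟨r, hr1, hr2, hr3, hr4⟩ := hred 4 (hndvd 4 (by norm_num) (by omega))
    have hner : stmt18_lam α (r:ℤ) ≠ 0 := by rw [← hr3]; exact hne 4 (hndvd 4 (by norm_num) (by omega))
    have hrne1 : r ≠ 1 := by
      intro h
      subst h
      rcases hr4 with h | h
      · have h' := dvd_neg.mpr h
        norm_num at h'
        exact hndvd 3 (by norm_num) (by omega) h'
      · have h' : (b:ℤ) ∣ 5 := by
          have he : ((1:ℕ):ℤ) + 4 = 5 := by norm_num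
          rwa [he] at h
        exact hndvd 5 (by norm_num) (by omega) h'
    set u12 : Fˣ := Units.mk0 _ (mul_ne_zero hne1 hne2) with hu12
    set u14 : Fˣ := Units.mk0 _ (mul_ne_zero hne1 hner) with hu14
    have hm12 : u12 ∈ Subgroup.closure S := by
      refine Subgroup.subset_closure (hpairS 1 2 le_rfl (by omega) (by norm_num) (by omega)
        (by norm_num) u12 ?_)
      push_cast [hu12]
      simp
    have hm14 : u14 ∈ Subgroup.closure S := by
      refine Subgroup.subset_closure (hpairS 1 r le_rfl (by omega) hr1 hr2
        (fun h => hrne1 h.symm) u14 ?_)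
      push_cast [hu14]
      simp
    have hkey : u1 = u12 ^ 2 * u14⁻¹ := by
      ext
      simp only [hu1, hu12, hu14, Units.val_mul, Units.val_pow_eq_pow_val,
        Units.val_inv_eq_inv_val, Units.val_mk0]
      rw [← hr3, hl4, hl2]
      field_simp
    rw [hkey]
    exact mul_mem (pow_mem hm12 2) (inv_mem hm14)
  refine le_antisymm ((Subgroup.closure_le _).mpr ?_) ((Subgroup.closure_le _).mpr ?_)
  · -- S ⊆ closure T
    rintro u ⟨i, j, hi1, hi2, hj1, hj2, hij, hu⟩
    rw [hform, hform] at hu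
    -- half of i+j and i-j
    have hh2 : 2 * (((b:ℤ)+1)/2) = (b:ℤ)+1 := by omega
    set h : ℤ := ((b:ℤ)+1)/2 with hhdef
    have hpne : ¬ (b:ℤ) ∣ h * ((i:ℤ) + j) := by
      rintro ⟨k, hk⟩
      have hdij : (b:ℤ) ∣ ((i:ℤ) + j) := by
        refine ⟨2*k - ((i:ℤ)+j), ?_⟩
        linear_combination 2 * hk - ((i:ℤ)+(j:ℤ)) * hh2
      exact hndvd _ (by omega) (by omega) hdij
    have hqne : ¬ (b:ℤ) ∣ h * ((i:ℤ) - j) := by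
      rintro ⟨k, hk⟩
      have hdij : (b:ℤ) ∣ ((i:ℤ) - j) := by
        refine ⟨2*k - ((i:ℤ)-j), ?_⟩
        linear_combination 2 * hk - ((i:ℤ)-(j:ℤ)) * hh2
      rcases le_or_gt (i:ℤ) j with hle | hlt
      · have : (b:ℤ) ∣ ((j:ℤ) - i) := by
          have := dvd_neg.mpr hdij
          rwa [neg_sub] at this
        have hij' : (i:ℤ) ≠ j := by
          intro h'; apply hij; exact_mod_cast h'
        exact hndvd _ (by omega) (by omega) this
      · exact hndvd _ (by omega) (by omega) hdij
    obtain ⟨p, hp1, hp2, hp3, _⟩ := hred _ hpne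
    obtain ⟨q, hq1, hq2, hq3, _⟩ := hred _ hqne
    have hval : (u:F) = stmt18_lam α p * stmt18_lam α q := by
      rw [← hp3, ← hq3, lam_mul hα0, hu]
      congr 1
      · apply lam_congr hα0 hbz
        left
        refine ⟨-(i:ℤ), ?_⟩
        linear_combination -(i:ℤ) * hh2
      · apply lam_congr hα0 hbz
        left
        refine ⟨-(j:ℤ), ?_⟩
        linear_combination -(j:ℤ) * hh2
    have hnep : stmt18_lam α (p:ℤ) ≠ 0 := by rw [← hp3]; exact hne _ hpne
    have hneq : stmt18_lam α (q:ℤ) ≠ 0 := by rw [← hq3]; exact hne _ hqne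
    have hkey : u = Units.mk0 _ hnep * Units.mk0 _ hneq := by
      ext; push_cast; exact hval
    rw [hkey]
    refine mul_mem (Subgroup.subset_closure ⟨p, hp1, hp2, ?_⟩)
      (Subgroup.subset_closure ⟨q, hq1, hq2, ?_⟩)
    · rw [hform]; rfl
    · rw [hform]; rfl
  · -- T ⊆ closure S
    rintro u ⟨i, hi1, hi2, hu⟩
    rw [hform] at hu
    by_cases hi' : i = 1
    · subst hi'
      have : u = u1 := by
        ext
        rw [hu, hu1, Units.val_mk0]
        norm_num
      rw [this]; exact hu1mem
    · have hnei : stmt18_lam α (i:ℤ) ≠ 0 := by rw [← hu]; exact u.ne_zero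
      set ui1 : Fˣ := Units.mk0 _ (mul_ne_zero hnei hne1) with hui1
      have hm : ui1 ∈ Subgroup.closure S := by
        refine Subgroup.subset_closure (hpairS i 1 hi1 hi2 le_rfl (by omega) hi' ui1 ?_)
        push_cast [hui1]
        simp
      have hkey : u = ui1 * u1⁻¹ := by
        ext
        simp only [hui1, hu1, Units.val_mul, Units.val_inv_eq_inv_val, Units.val_mk0]
        rw [hu, mul_assoc, mul_inv_cancel₀ hne1, mul_one]
      rw [hkey]
      exact mul_mem hm (inv_mem hu1mem)
end
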